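/- Let w = 2^m with m ≥ 1. The degree χ_λ(1) of the irreducible character of S_w labeled by a partition λ of w is odd if and only if λ is a hook partition (r, 1^{w−r}) for some 1 ≤ r ≤ w. -/

import Mathlib

/-!
Write `n = |μ|` and `N_q(μ)` for the number of cells of `μ` whose hook length is divisible by `q`.
The hook lengths in row `i` are the distances from the bead `β_i = h(i, 0)` of the beta-set
`{h(i, 0)}` down to the gaps below it, so row `i` contributes `⌊β_i / q⌋` minus the number of beads
below `β_i` on its runner of the `q`-abacus. Pushing all beads up their runners puts them in
distinct positions, and comparing sums gives `q · N_q(μ) ≤ n`. Hence the `p`-adic valuation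
`∑ᵢ N_{pⁱ}(μ)` of the hook product is at most `∑ᵢ ⌊n / pⁱ⌋ = v_p(n!)`: the hook length formula is an
exact division, and `p ∤ χ_μ(1)` iff `N_{pⁱ}(μ) = ⌊n / pⁱ⌋` for all `i ≥ 1`.

For `n = 2^m` and `i = m` this asks for a hook of length `n`, which only hook partitions have.
Conversely the hook lengths of `(r, 1^(n-r))` are `n`, `1, …, r - 1` and `1, …, n - r`, and
`⌊(r-1)/q⌋ + ⌊(n-r)/q⌋ + 1 = n / q` whenever `q ∣ n`.
-/

open Finset

/-- The hook length of the cell `(i, j)` of a Young diagram `μ`: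
arm length + leg length + 1. -/
def hookLength (μ : YoungDiagram) (i j : ℕ) : ℕ :=
  (μ.rowLen i - j) + (μ.colLen j - i) - 1

/-- The degree of the irreducible character of `S_n` labeled by a partition `μ` of
`n`, given by the hook length formula (= the number of standard Young tableaux of
shape `μ`). -/
def charDegree (μ : YoungDiagram) : ℕ :=
  Nat.factorial μ.card / ∏ c ∈ μ.cells, hookLength μ c.1 c.2

theorem Nat.card_filter_range_dvd_sub (a q : ℕ) : #{j ∈ range a | q ∣ a - j} = a / q := by
  rw [← Nat.card_multiples]
  refine card_nbij' (a - 1 - ·) (a - 1 - ·) ?_ ?_ ?_ ?_ <;> intro j hj <;>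
    simp only [coe_filter, mem_range, Set.mem_ofPred_eq] at hj ⊢
  · exact ⟨by omega, by rw [show a - 1 - j + 1 = a - j by omega]; exact hj.2⟩
  · exact ⟨by omega, by rw [show a - (a - 1 - j) = j + 1 by omega]; exact hj.2⟩
  · omega
  · omega

theorem Finset.sum_range_card_le_sum_of_injOn {ι : Type*} (s : Finset ι) {f : ι → ℕ}
    (hf : Set.InjOn f s) : ∑ j ∈ range #s, j ≤ ∑ x ∈ s, f x := by
  have hinj : Set.InjOn (fun x ↦ (f x : ℤ)) s := fun a ha b hb h ↦ hf ha hb (Nat.cast_injective h)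
  have := Finset.sum_range_le_sum (s := s.image fun x ↦ (f x : ℤ)) (c := 0) (by simp)
  rw [card_image_of_injOn hinj, sum_image hinj] at this
  have key : ((∑ j ∈ range #s, j : ℕ) : ℤ) ≤ ((∑ x ∈ s, f x : ℕ) : ℤ) := by
    push_cast; simpa using this
  exact_mod_cast key

theorem Nat.div_add_div_add_one {a b q : ℕ} (hq : 0 < q) (hdvd : q ∣ a + b + 1) :
    a / q + b / q + 1 = (a + b + 1) / q := by
  obtain ⟨D, hD⟩ := hdvd
  rw [hD, Nat.mul_div_cancel_left _ hq]
  have := Nat.div_add_mod a q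
  have := Nat.div_add_mod b q
  have := Nat.mod_lt a hq
  have := Nat.mod_lt b hq
  have hsplit : q * D = q * (a / q + b / q) + (a % q + b % q + 1) := by rw [mul_add]; omega
  have hlo : a / q + b / q < D := by
    by_contra h
    have := Nat.mul_le_mul_left q (not_lt.mp h)
    omega
  have hhi : D < a / q + b / q + 2 := by
    by_contra h
    have := Nat.mul_le_mul_left q (not_lt.mp h)
    rw [mul_add] at this
    omega
  omega

open scoped Nat

namespace YoungDiagram

variable {μ : YoungDiagram}

theorem hookLength_add_one {i j : ℕ} (h : (i, j) ∈ μ) :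
    hookLength μ i j + 1 = (μ.rowLen i - j) + (μ.colLen j - i) := by
  have := mem_iff_lt_rowLen.mp h
  have := mem_iff_lt_colLen.mp h
  unfold hookLength; omega

theorem hookLength_pos {i j : ℕ} (h : (i, j) ∈ μ) : 0 < hookLength μ i j := by
  have := hookLength_add_one h
  have := mem_iff_lt_rowLen.mp h
  have := mem_iff_lt_colLen.mp h
  omega

theorem hookLength_zero_right (μ : YoungDiagram) (i : ℕ) :
    hookLength μ i 0 = μ.rowLen i + (μ.colLen 0 - 1 - i) := by
  have := (mem_iff_lt_rowLen (μ := μ) (i := i) (j := 0)).symm.trans mem_iff_lt_colLen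
  unfold hookLength; omega

theorem hookLength_add_le_hookLength_zero_right {i j : ℕ} (h : (i, j) ∈ μ) :
    hookLength μ i j + j ≤ hookLength μ i 0 := by
  have := hookLength_add_one h
  have := mem_iff_lt_rowLen.mp h
  have := μ.colLen_anti 0 j j.zero_le
  rw [hookLength_zero_right]; omega

theorem strictAntiOn_hookLength_row (μ : YoungDiagram) (i : ℕ) :
    StrictAntiOn (hookLength μ i) (Set.Iio (μ.rowLen i)) := by
  intro a ha b (hb : b < _) hab
  have := hookLength_add_one (mem_iff_lt_rowLen.mpr ha)
  have := hookLength_add_one (mem_iff_lt_rowLen.mpr hb)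
  have := mem_iff_lt_colLen.mp (mem_iff_lt_rowLen.mpr hb)
  have := μ.colLen_anti a b hab.le
  omega

theorem strictAntiOn_hookLength_col (μ : YoungDiagram) (j : ℕ) :
    StrictAntiOn (hookLength μ · j) (Set.Iio (μ.colLen j)) := by
  intro a ha b (hb : b < _) hab
  have := hookLength_add_one (mem_iff_lt_colLen.mpr ha)
  have := hookLength_add_one (mem_iff_lt_colLen.mpr hb)
  have := mem_iff_lt_rowLen.mp (mem_iff_lt_colLen.mpr hb)
  have := μ.rowLen_anti a b hab.le
  simp only
  omega

def betaSet (μ : YoungDiagram) : Finset ℕ :=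
  (range (μ.colLen 0)).image (hookLength μ · 0)

theorem filter_range_mem_betaSet {i : ℕ} (hi : i < μ.colLen 0) :
    {b ∈ range (hookLength μ i 0) | b ∈ μ.betaSet} =
      (Ioo i (μ.colLen 0)).image (hookLength μ · 0) := by
  have hanti := strictAntiOn_hookLength_col μ 0
  ext b
  simp only [betaSet, mem_filter, mem_range, mem_image, mem_Ioo]
  constructor
  · rintro ⟨hb, t, ht, rfl⟩
    exact ⟨t, ⟨(hanti.lt_iff_gt ht hi).mp hb, ht⟩, rfl⟩
  · rintro ⟨t, ⟨hit, ht⟩, rfl⟩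
    exact ⟨(hanti.lt_iff_gt ht hi).mpr hit, t, ht, rfl⟩

theorem sub_hookLength_notMem_betaSet {i j : ℕ} (h : (i, j) ∈ μ) :
    hookLength μ i 0 - hookLength μ i j ∉ μ.betaSet := by
  -- The left side is `j + colLen 0 - colLen j`; a bead `h(t, 0)` is larger than that when
  -- `(t, j) ∈ μ` and smaller otherwise.
  simp only [betaSet, mem_image, mem_range, not_exists, not_and]
  intro t ht heq
  have := hookLength_add_one h
  have := mem_iff_lt_rowLen.mp h
  have := mem_iff_lt_colLen.mp h
  have := μ.colLen_anti 0 j j.zero_le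
  have := (mem_iff_lt_rowLen (μ := μ) (i := t) (j := 0)).symm.trans mem_iff_lt_colLen |>.mpr ht
  rw [hookLength_zero_right, hookLength_zero_right] at heq
  by_cases htj : (t, j) ∈ μ
  · have := mem_iff_lt_rowLen.mp htj
    have := mem_iff_lt_colLen.mp htj
    omega
  · have := mem_iff_lt_rowLen.not.mp htj
    have := mem_iff_lt_colLen.not.mp htj
    omega

theorem injOn_sub_hookLength_row (μ : YoungDiagram) (i : ℕ) :
    Set.InjOn (fun j ↦ hookLength μ i 0 - hookLength μ i j) (Set.Iio (μ.rowLen i)) := by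
  intro a (ha : a < _) b (hb : b < _) hab
  have := hookLength_add_le_hookLength_zero_right (mem_iff_lt_rowLen.mpr ha)
  have := hookLength_add_le_hookLength_zero_right (mem_iff_lt_rowLen.mpr hb)
  exact (strictAntiOn_hookLength_row μ i).injOn ha hb (by simp only at hab; omega)

theorem image_sub_hookLength_row {i : ℕ} (hi : i < μ.colLen 0) :
    (range (μ.rowLen i)).image (fun j ↦ hookLength μ i 0 - hookLength μ i j) =
      {b ∈ range (hookLength μ i 0) | b ∉ μ.betaSet} := by
  refine eq_of_subset_of_card_le ?_ ?_
  · simp only [subset_iff, mem_image, mem_range, mem_filter]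
    rintro _ ⟨j, hj, rfl⟩
    have hmem := mem_iff_lt_rowLen.mpr hj
    have := hookLength_pos hmem
    have := hookLength_add_le_hookLength_zero_right hmem
    exact ⟨by omega, sub_hookLength_notMem_betaSet hmem⟩
  · have hbeads := congrArg card (filter_range_mem_betaSet hi)
    rw [card_image_of_injOn ((strictAntiOn_hookLength_col μ 0).injOn.mono
      (by simp [Set.subset_def])), Nat.card_Ioo] at hbeads
    have hsplit := card_filter_add_card_filter_not (s := range (hookLength μ i 0)) (· ∈ μ.betaSet)
    rw [card_image_of_injOn (by simpa using injOn_sub_hookLength_row μ i), card_range]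
    rw [card_range] at hsplit
    rw [hookLength_zero_right] at hsplit hbeads ⊢
    omega

def rowHookCount (μ : YoungDiagram) (q i : ℕ) : ℕ :=
  #{j ∈ range (μ.rowLen i) | q ∣ hookLength μ i j}

/-- The number of beads of the `q`-abacus of `betaSet μ` lying on the runner of the bead
`hookLength μ i 0` at a lower position. -/
def abacusLevel (μ : YoungDiagram) (q i : ℕ) : ℕ :=
  #{t ∈ Ioo i (μ.colLen 0) | hookLength μ t 0 ≡ hookLength μ i 0 [MOD q]}

theorem rowHookCount_add_abacusLevel (q : ℕ) {i : ℕ} (hi : i < μ.colLen 0) :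
    μ.rowHookCount q i + μ.abacusLevel q i = hookLength μ i 0 / q := by
  set e := hookLength μ i 0
  -- Sort the points `b < e` with `q ∣ e - b` into gaps (the hooks of row `i`) and beads.
  rw [← Nat.card_filter_range_dvd_sub e q, ← card_filter_add_card_filter_not (· ∈ μ.betaSet),
    add_comm, filter_comm, filter_range_mem_betaSet hi, filter_comm, ← image_sub_hookLength_row hi,
    filter_image, filter_image, card_image_of_injOn, card_image_of_injOn]
  · unfold abacusLevel rowHookCount
    congr 1
    · refine congrArg card (filter_congr fun t ht ↦ ?_)
      have hlt := (strictAntiOn_hookLength_col μ 0).lt_iff_gt (mem_Ioo.mp ht).2 hi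
      exact Nat.modEq_iff_dvd' (hlt.mpr (mem_Ioo.mp ht).1).le
    · refine congrArg card (filter_congr fun j hj ↦ ?_)
      have := hookLength_add_le_hookLength_zero_right (mem_iff_lt_rowLen.mpr (mem_range.mp hj))
      rw [Nat.sub_sub_self (by omega)]
  · exact (injOn_sub_hookLength_row μ i).mono fun j hj ↦ mem_range.mp (mem_filter.mp hj).1
  · exact (strictAntiOn_hookLength_col μ 0).injOn.mono fun t ht ↦
      (mem_Ioo.mp (mem_filter.mp ht).1).2

theorem abacusLevel_lt_of_modEq (q : ℕ) {a b : ℕ} (hab : a < b) (hb : b < μ.colLen 0)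
    (hmod : hookLength μ b 0 ≡ hookLength μ a 0 [MOD q]) :
    μ.abacusLevel q b < μ.abacusLevel q a := by
  have hsub : insert b {t ∈ Ioo b (μ.colLen 0) | hookLength μ t 0 ≡ hookLength μ b 0 [MOD q]} ⊆
      {t ∈ Ioo a (μ.colLen 0) | hookLength μ t 0 ≡ hookLength μ a 0 [MOD q]} := by
    intro t ht
    simp only [mem_insert, mem_filter, mem_Ioo] at ht ⊢
    rcases ht with rfl | ⟨⟨hbt, htk⟩, ht⟩
    · exact ⟨⟨hab, hb⟩, hmod⟩
    · exact ⟨⟨hab.trans hbt, htk⟩, ht.trans hmod⟩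
  have := card_le_card hsub
  rw [card_insert_of_notMem (by simp)] at this
  exact this

/-- Pushing the beads of the `q`-abacus up their runners moves them to distinct positions. -/
theorem injOn_abacusPosition {q : ℕ} (hq : 0 < q) :
    Set.InjOn (fun i ↦ q * μ.abacusLevel q i + hookLength μ i 0 % q) (Set.Iio (μ.colLen 0)) := by
  have key : ∀ a b, a < b → b < μ.colLen 0 →
      q * μ.abacusLevel q a + hookLength μ a 0 % q ≠
        q * μ.abacusLevel q b + hookLength μ b 0 % q := by
    intro a b hab hb heq
    have hmod : hookLength μ b 0 % q = hookLength μ a 0 % q := by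
      have := congrArg (· % q) heq
      simp only [Nat.mul_add_mod, Nat.mod_mod] at this
      exact this.symm
    have hlt := abacusLevel_lt_of_modEq q hab hb hmod
    rw [hmod, Nat.add_right_cancel_iff] at heq
    exact hlt.ne' (Nat.eq_of_mul_eq_mul_left hq heq)
  intro a (ha : a < _) b (hb : b < _) heq
  rcases lt_trichotomy a b with hab | rfl | hab
  · exact absurd heq (key a b hab hb)
  · rfl
  · exact absurd heq.symm (key b a hab ha)

def numHooksDvd (μ : YoungDiagram) (q : ℕ) : ℕ :=
  #{c ∈ μ.cells | q ∣ hookLength μ c.1 c.2}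

theorem numHooksDvd_eq_sum_rowHookCount (μ : YoungDiagram) (q : ℕ) :
    μ.numHooksDvd q = ∑ i ∈ range (μ.colLen 0), μ.rowHookCount q i := by
  rw [numHooksDvd, card_eq_sum_card_fiberwise (f := Prod.fst) (t := range (μ.colLen 0))]
  · refine sum_congr rfl fun i _ ↦ card_nbij' Prod.snd (fun j ↦ (i, j)) ?_ ?_ ?_ ?_
    · rintro ⟨a, j⟩ hc
      simp only [mem_coe, mem_filter, mem_cells] at hc ⊢
      obtain ⟨⟨hmem, hdvd⟩, rfl⟩ := hc
      exact ⟨mem_range.mpr (mem_iff_lt_rowLen.mp hmem), hdvd⟩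
    · intro j hj
      simp only [mem_coe, mem_filter, mem_cells, mem_range, and_true] at hj ⊢
      exact ⟨mem_iff_lt_rowLen.mpr hj.1, hj.2⟩
    · rintro ⟨a, j⟩ hc
      simp only [mem_coe, mem_filter] at hc
      simp [hc.2]
    · intro j _
      rfl
  · rintro ⟨i, j⟩ hc
    have hmem := (mem_cells _).mp (mem_filter.mp hc).1
    exact mem_range.mpr ((mem_iff_lt_colLen.mp hmem).trans_le (μ.colLen_anti 0 j j.zero_le))

theorem card_eq_sum_rowLen (μ : YoungDiagram) :
    μ.card = ∑ i ∈ range (μ.colLen 0), μ.rowLen i := by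
  simpa [numHooksDvd, rowHookCount] using numHooksDvd_eq_sum_rowHookCount μ 1

theorem sum_hookLength_zero_right (μ : YoungDiagram) :
    ∑ i ∈ range (μ.colLen 0), hookLength μ i 0 = μ.card + ∑ i ∈ range (μ.colLen 0), i := by
  simp only [hookLength_zero_right, sum_add_distrib, card_eq_sum_rowLen]
  congr 1
  exact sum_range_reflect (fun i ↦ i) _

theorem mul_numHooksDvd_le_card {q : ℕ} (hq : 0 < q) : q * μ.numHooksDvd q ≤ μ.card := by
  have hbeads := sum_range_card_le_sum_of_injOn (range (μ.colLen 0))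
    (coe_range _ ▸ injOn_abacusPosition (μ := μ) hq)
  rw [card_range] at hbeads
  have hsplit : ∑ i ∈ range (μ.colLen 0), hookLength μ i 0 = q * μ.numHooksDvd q +
      ∑ i ∈ range (μ.colLen 0), (q * μ.abacusLevel q i + hookLength μ i 0 % q) := by
    rw [numHooksDvd_eq_sum_rowHookCount, mul_sum, ← sum_add_distrib]
    refine sum_congr rfl fun i hi ↦ ?_
    calc hookLength μ i 0 = q * (hookLength μ i 0 / q) + hookLength μ i 0 % q :=
          (Nat.div_add_mod _ _).symm
      _ = _ := by rw [← rowHookCount_add_abacusLevel q (mem_range.mp hi)]; ring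
  have := sum_hookLength_zero_right μ
  omega

theorem numHooksDvd_le_card_div {q : ℕ} (hq : 0 < q) : μ.numHooksDvd q ≤ μ.card / q :=
  (Nat.le_div_iff_mul_le hq).mpr (mul_comm q _ ▸ mul_numHooksDvd_le_card hq)

def cornerHook (μ : YoungDiagram) : Finset (ℕ × ℕ) :=
  insert (0, 0) ((range (μ.rowLen 0 - 1)).image (fun j ↦ (0, j + 1)) ∪
    (range (μ.colLen 0 - 1)).image (fun i ↦ (i + 1, 0)))

theorem card_cornerHook (μ : YoungDiagram) :
    #μ.cornerHook = 1 + (μ.rowLen 0 - 1) + (μ.colLen 0 - 1) := by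
  rw [cornerHook, card_insert_of_notMem (by simp), card_union_of_disjoint (by
      simp [disjoint_left]), card_image_of_injective _ (fun a b h ↦ by simpa using h),
    card_image_of_injective _ (fun a b h ↦ by simpa using h), card_range, card_range]
  ring

theorem cornerHook_subset_cells (h : (0, 0) ∈ μ) : μ.cornerHook ⊆ μ.cells := by
  have := mem_iff_lt_rowLen.mp h
  have := mem_iff_lt_colLen.mp h
  intro c hc
  simp only [cornerHook, mem_insert, mem_union, mem_image, mem_range] at hc
  rw [mem_cells]
  rcases hc with rfl | ⟨j, hj, rfl⟩ | ⟨i, hi, rfl⟩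
  · exact h
  · exact mem_iff_lt_rowLen.mpr (by omega)
  · exact mem_iff_lt_colLen.mpr (by omega)

theorem hookLength_zero_zero_add_one (h : (0, 0) ∈ μ) :
    hookLength μ 0 0 + 1 = μ.rowLen 0 + μ.colLen 0 := by
  simpa using hookLength_add_one h

theorem hookLength_le_hookLength_zero_zero {i j : ℕ} (h : (i, j) ∈ μ) :
    hookLength μ i j ≤ hookLength μ 0 0 := by
  have := hookLength_add_one h
  have := hookLength_zero_zero_add_one (μ.up_left_mem i.zero_le j.zero_le h)
  have := μ.rowLen_anti 0 i i.zero_le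
  have := μ.colLen_anti 0 j j.zero_le
  omega

theorem hookLength_zero_zero_le_card (h : (0, 0) ∈ μ) : hookLength μ 0 0 ≤ μ.card := by
  have hcard : #μ.cornerHook ≤ μ.card := card_le_card (cornerHook_subset_cells h)
  have := hookLength_zero_zero_add_one h
  rw [card_cornerHook] at hcard
  omega

theorem hookLength_le_card {i j : ℕ} (h : (i, j) ∈ μ) : hookLength μ i j ≤ μ.card :=
  (hookLength_le_hookLength_zero_zero h).trans
    (hookLength_zero_zero_le_card (μ.up_left_mem i.zero_le j.zero_le h))

theorem hookLength_zero_zero_lt_card (h : (1, 1) ∈ μ) : hookLength μ 0 0 < μ.card := by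
  have h00 := μ.up_left_mem zero_le_one zero_le_one h
  have hsub : insert (1, 1) μ.cornerHook ⊆ μ.cells :=
    insert_subset ((mem_cells _).mpr h) (cornerHook_subset_cells h00)
  have hcard : #(insert (1, 1) μ.cornerHook) ≤ μ.card := card_le_card hsub
  rw [card_insert_of_notMem (by simp [cornerHook]), card_cornerHook] at hcard
  have := hookLength_zero_zero_add_one h00
  omega

theorem cells_eq_cornerHook (h00 : (0, 0) ∈ μ) (h11 : (1, 1) ∉ μ) : μ.cells = μ.cornerHook := by
  refine ((cornerHook_subset_cells h00).antisymm fun ⟨i, j⟩ hc ↦ ?_).symm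
  have hc := (mem_cells _).mp hc
  have hij : i = 0 ∨ j = 0 := by
    by_contra! hij
    exact h11 (μ.up_left_mem (Nat.one_le_iff_ne_zero.mpr hij.1)
      (Nat.one_le_iff_ne_zero.mpr hij.2) hc)
  have := mem_iff_lt_rowLen.mp hc
  have := mem_iff_lt_colLen.mp hc
  have := μ.rowLen_anti 0 i i.zero_le
  have := μ.colLen_anti 0 j j.zero_le
  simp only [cornerHook, mem_insert, mem_union, mem_image, mem_range, Prod.mk.injEq]
  rcases hij with rfl | rfl
  · rcases j with _ | j
    · exact .inl ⟨rfl, rfl⟩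
    · exact .inr (.inl ⟨j, by omega, rfl, rfl⟩)
  · rcases i with _ | i
    · exact .inl ⟨rfl, rfl⟩
    · exact .inr (.inr ⟨i, by omega, rfl, rfl⟩)

/-- `μ` is a hook partition `(r, 1^(n - r))`. -/
def IsHook (μ : YoungDiagram) : Prop :=
  (0, 0) ∈ μ ∧ (1, 1) ∉ μ

theorem isHook_of_hookLength_eq_card {i j : ℕ} (h : (i, j) ∈ μ)
    (hcard : hookLength μ i j = μ.card) : μ.IsHook :=
  ⟨μ.up_left_mem i.zero_le j.zero_le h, fun h11 ↦
    ((hookLength_le_hookLength_zero_zero h).trans_lt (hookLength_zero_zero_lt_card h11)).ne hcard⟩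

theorem isHook_of_numHooksDvd_card_pos (h : 0 < μ.numHooksDvd μ.card) : μ.IsHook := by
  obtain ⟨⟨i, j⟩, hc⟩ := card_pos.mp h
  rw [mem_filter, mem_cells] at hc
  exact isHook_of_hookLength_eq_card hc.1 ((hookLength_le_card hc.1).antisymm
    (Nat.le_of_dvd (hookLength_pos hc.1) hc.2))

namespace IsHook

theorem card_add_one (hμ : μ.IsHook) : μ.card + 1 = μ.rowLen 0 + μ.colLen 0 := by
  have := mem_iff_lt_rowLen.mp hμ.1
  have := mem_iff_lt_colLen.mp hμ.1
  have := card_cornerHook μ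
  rw [← cells_eq_cornerHook hμ.1 hμ.2] at this
  change μ.card = _ at this
  omega

theorem rowLen_succ (hμ : μ.IsHook) {i : ℕ} (hi : i + 1 < μ.colLen 0) : μ.rowLen (i + 1) = 1 := by
  have h0 : 0 < μ.rowLen (i + 1) := mem_iff_lt_rowLen.mp (mem_iff_lt_colLen.mpr hi)
  have h1 : ¬ 1 < μ.rowLen (i + 1) := fun h ↦
    hμ.2 (μ.up_left_mem (Nat.le_add_left 1 i) le_rfl (mem_iff_lt_rowLen.mpr h))
  omega

theorem colLen_succ (hμ : μ.IsHook) {j : ℕ} (hj : j + 1 < μ.rowLen 0) : μ.colLen (j + 1) = 1 := by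
  have h0 : 0 < μ.colLen (j + 1) := mem_iff_lt_colLen.mp (mem_iff_lt_rowLen.mpr hj)
  have h1 : ¬ 1 < μ.colLen (j + 1) := fun h ↦
    hμ.2 (μ.up_left_mem le_rfl (Nat.le_add_left 1 j) (mem_iff_lt_colLen.mpr h))
  omega

end IsHook

theorem isHook_iff_rowLens : μ.IsHook ↔
    ∃ r, 1 ≤ r ∧ r ≤ μ.card ∧ μ.rowLens = r :: List.replicate (μ.card - r) 1 := by
  constructor
  · intro hμ
    obtain ⟨k, hk⟩ := Nat.exists_eq_add_one_of_ne_zero (mem_iff_lt_colLen.mp hμ.1).ne'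
    have hcard := hμ.card_add_one
    refine ⟨μ.rowLen 0, mem_iff_lt_rowLen.mp hμ.1, by omega, ?_⟩
    rw [rowLens, hk, List.range_succ_eq_map, List.map_cons, List.map_map,
      show μ.card - μ.rowLen 0 = (List.range k).length by simp; omega]
    exact congrArg _ (List.map_eq_replicate_iff.mpr fun i hi ↦
      hμ.rowLen_succ (by simp only [List.mem_range] at hi; omega))
  · rintro ⟨r, -, -, hrow⟩
    have hlen := congrArg List.length hrow
    simp only [length_rowLens, List.length_cons, List.length_replicate] at hlen
    refine ⟨mem_iff_lt_colLen.mpr (by omega), fun h11 ↦ ?_⟩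
    have h1 : 1 < μ.colLen 0 := mem_iff_lt_colLen.mp (μ.up_left_mem le_rfl zero_le_one h11)
    have hrow1 := List.getElem_of_eq hrow (i := 1) (by simpa using h1)
    simp only [get_rowLens, List.getElem_cons_succ, List.getElem_replicate] at hrow1
    exact (mem_iff_lt_rowLen.mp h11).ne' hrow1

theorem IsHook.numHooksDvd_eq (hμ : μ.IsHook) {q : ℕ} (hq : 0 < q) (hdvd : q ∣ μ.card) :
    μ.numHooksDvd q = μ.card / q := by
  have hcard := hμ.card_add_one
  have hr := mem_iff_lt_rowLen.mp hμ.1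
  have hk := mem_iff_lt_colLen.mp hμ.1
  have hcorner : hookLength μ 0 0 = μ.card := by
    have := hookLength_zero_zero_add_one hμ.1
    omega
  have harm : ∀ j ∈ range (μ.rowLen 0 - 1),
      q ∣ hookLength μ 0 (j + 1) ↔ q ∣ μ.rowLen 0 - 1 - j := fun j hj ↦ by
    rw [hookLength, hμ.colLen_succ (by simp at hj; omega)]
    simp only [Nat.sub_zero, Nat.add_sub_cancel]
    rw [show μ.rowLen 0 - (j + 1) = μ.rowLen 0 - 1 - j by omega]
  have hleg : ∀ i ∈ range (μ.colLen 0 - 1),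
      q ∣ hookLength μ (i + 1) 0 ↔ q ∣ μ.colLen 0 - 1 - i := fun i hi ↦ by
    rw [hookLength, hμ.rowLen_succ (by simp at hi; omega)]
    rw [show 1 - 0 + (μ.colLen 0 - (i + 1)) - 1 = μ.colLen 0 - 1 - i by omega]
  rw [numHooksDvd, cells_eq_cornerHook hμ.1 hμ.2, cornerHook, filter_insert,
    if_pos (hcorner ▸ hdvd), card_insert_of_notMem (by simp), filter_union,
    card_union_of_disjoint (disjoint_filter_filter (by simp [disjoint_left])), filter_image,
    filter_image, card_image_of_injective _ (fun a b h ↦ by simpa using h),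
    card_image_of_injective _ (fun a b h ↦ by simpa using h)]
  have hsum : μ.rowLen 0 - 1 + (μ.colLen 0 - 1) + 1 = μ.card := by omega
  rw [filter_congr harm, filter_congr hleg, Nat.card_filter_range_dvd_sub,
    Nat.card_filter_range_dvd_sub, Nat.div_add_div_add_one hq (hsum ▸ hdvd), hsum]

def hookProduct (μ : YoungDiagram) : ℕ :=
  ∏ c ∈ μ.cells, hookLength μ c.1 c.2

theorem charDegree_eq_factorial_div (μ : YoungDiagram) :
    charDegree μ = μ.card ! / μ.hookProduct :=
  rfl

theorem hookProduct_ne_zero (μ : YoungDiagram) : μ.hookProduct ≠ 0 :=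
  prod_ne_zero_iff.mpr fun _ hc ↦ (hookLength_pos ((mem_cells _).mp hc)).ne'

theorem factorization_hookProduct {p b : ℕ} (hp : p.Prime) (hb : Nat.log p μ.card < b) :
    μ.hookProduct.factorization p = ∑ i ∈ Ico 1 b, μ.numHooksDvd (p ^ i) := by
  have hpow : ∀ c ∈ μ.cells, (hookLength μ c.1 c.2).factorization p =
      #{i ∈ Ico 1 b | p ^ i ∣ hookLength μ c.1 c.2} := fun c hc ↦
    Nat.factorization_eq_card_pow_dvd_of_lt hp (hookLength_pos ((mem_cells _).mp hc))
      ((hookLength_le_card ((mem_cells _).mp hc)).trans_lt (Nat.lt_pow_of_log_lt hp.one_lt hb))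
  rw [hookProduct, Nat.factorization_prod fun c hc ↦ (hookLength_pos ((mem_cells _).mp hc)).ne',
    Finsupp.finsetSum_apply, sum_congr rfl hpow]
  simp only [numHooksDvd, card_filter]
  exact sum_comm

theorem hookProduct_dvd_factorial (μ : YoungDiagram) : μ.hookProduct ∣ μ.card ! := by
  refine (Nat.factorization_prime_le_iff_dvd μ.hookProduct_ne_zero μ.card.factorial_ne_zero).mp
    fun p hp ↦ ?_
  rw [factorization_hookProduct hp (Nat.lt_succ_self _),
    Nat.factorization_factorial hp (Nat.lt_succ_self _)]
  exact sum_le_sum fun i _ ↦ numHooksDvd_le_card_div (pow_pos hp.pos i)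

/-- Macdonald's criterion for a character degree to be prime to `p`. -/
theorem not_dvd_charDegree_iff {p b : ℕ} (hp : p.Prime) (hb : Nat.log p μ.card < b) :
    ¬ p ∣ charDegree μ ↔ ∀ i ∈ Ico 1 b, μ.numHooksDvd (p ^ i) = μ.card / p ^ i := by
  have hdvd := μ.hookProduct_dvd_factorial
  have hne : charDegree μ ≠ 0 := (Nat.div_pos (Nat.le_of_dvd μ.card.factorial_pos hdvd)
    (Nat.pos_of_ne_zero μ.hookProduct_ne_zero)).ne'
  have hle : ∀ i ∈ Ico 1 b, μ.numHooksDvd (p ^ i) ≤ μ.card / p ^ i :=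
    fun i _ ↦ numHooksDvd_le_card_div (pow_pos hp.pos i)
  rw [hp.dvd_iff_one_le_factorization hne, not_le, Nat.lt_one_iff, charDegree_eq_factorial_div,
    Nat.factorization_div hdvd, Finsupp.coe_tsub, Pi.sub_apply, Nat.factorization_factorial hp hb,
    factorization_hookProduct hp hb, tsub_eq_zero_iff_le, ← sum_eq_sum_iff_of_le hle]
  exact ⟨fun h ↦ (sum_le_sum hle).antisymm h, fun h ↦ h.ge⟩

end YoungDiagram

/-- Let `w = 2^m` with `m ≥ 1`.  The degree `χ_λ(1)` of the irreducible character
of `S_w` labeled by a partition `λ` of `w` is odd if and only if `λ` is a hook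
partition `(r, 1^{w−r})` for some `1 ≤ r ≤ w`. -/
theorem stmt16 (m w : ℕ) (hm : 1 ≤ m) (hw : w = 2 ^ m)
    (μ : YoungDiagram) (hμ : μ.card = w) :
    Odd (charDegree μ) ↔
      ∃ r, 1 ≤ r ∧ r ≤ w ∧ μ.rowLens = r :: List.replicate (w - r) 1 := by
  subst hw
  have hlog : Nat.log 2 μ.card < m + 1 := by
    rw [hμ, Nat.log_pow one_lt_two]
    exact m.lt_succ_self
  rw [← hμ, ← YoungDiagram.isHook_iff_rowLens, ← Nat.not_even_iff_odd, even_iff_two_dvd,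
    YoungDiagram.not_dvd_charDegree_iff Nat.prime_two hlog]
  constructor
  · intro h
    refine YoungDiagram.isHook_of_numHooksDvd_card_pos ?_
    rw [hμ, h m (mem_Ico.mpr ⟨hm, m.lt_succ_self⟩), hμ, Nat.div_self (pow_pos two_pos m)]
    exact one_pos
  · intro hhook i hi
    exact hhook.numHooksDvd_eq (pow_pos two_pos i)
      (hμ ▸ pow_dvd_pow 2 (Nat.lt_succ_iff.mp (mem_Ico.mp hi).2))
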